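/- Define the averaging map f : R → R by f(p) = (1/n!) Σ_{w ∈ S_n} w·p. Then f is well defined (maps R into R), each image f(p) is invariant under the dot action (u·f(p) = f(p) for every u ∈ S_n), and the averaged canonical classes {f(p_w) : w ∈ S_n} form a ℂ[t_1,…,t_n]-module basis of R. Hence the dot representation of S_n on R is a direct sum of n! copies of the trivial representation (with ℂ[t_1,…,t_n]-coefficients, twisted by the S_n-action on coefficients). -/

import Mathlib

open MvPolynomial Equiv Finset

noncomputable section

/-- The polynomial ring ℂ[t₁,…,tₙ]. -/
abbrev Pol (n : ℕ) : Type := MvPolynomial (Fin n) ℂ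

/-- The action of a permutation `w` on polynomials by the substitution `tᵢ ↦ t_{w(i)}`. -/

def pact {n : ℕ} (w : Perm (Fin n)) (f : Pol n) : Pol n := rename ⇑w f

/-- The GKM condition defining `R ⊆ ∏_{v ∈ Sₙ} ℂ[t₁,…,tₙ]`: for every `v` and every
transposition `(i j)` with `i < j`, the difference `p(v) − p((i j)v)` is divisible by
`tᵢ − tⱼ`. -/

def GKM (n : ℕ) (p : Perm (Fin n) → Pol n) : Prop :=
  ∀ (v : Perm (Fin n)) (i j : Fin n), i < j →
    (X i - X j : Pol n) ∣ (p v - p (Equiv.swap i j * v))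

/-- The length of a permutation: its number of inversions. -/

def len {n : ℕ} (w : Perm (Fin n)) : ℕ :=
  (Finset.univ.filter fun q : Fin n × Fin n => q.1 < q.2 ∧ w q.2 < w q.1).card

/-- Bruhat order: the partial order generated by `u < (i j) u` whenever `ℓ(u) < ℓ((i j)u)`. -/

def bruhatLE {n : ℕ} : Perm (Fin n) → Perm (Fin n) → Prop :=
  Relation.ReflTransGen
    (fun u v => (∃ i j : Fin n, i < j ∧ v = Equiv.swap i j * u) ∧ len u < len v)

/-- `p` is the canonical class (equivariant Schubert class) of `w`:
(i) each component is homogeneous of degree `ℓ(w)`; (ii) `p(v) = 0` unless `v ≥ w` in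
Bruhat order; (iii) `p(w) = ∏ (tᵢ − tⱼ)` over pairs `i < j` with `ℓ((i j)w) < ℓ(w)`;
and `p` satisfies the GKM conditions. -/

def IsCanonical {n : ℕ} (w : Perm (Fin n)) (p : Perm (Fin n) → Pol n) : Prop :=
  GKM n p ∧
  (∀ v, (p v).IsHomogeneous (len w)) ∧
  (∀ v, ¬ bruhatLE w v → p v = 0) ∧
  p w = ∏ q ∈ Finset.univ.filter
      (fun q : Fin n × Fin n => q.1 < q.2 ∧ len (Equiv.swap q.1 q.2 * w) < len w),
      (X q.1 - X q.2 : Pol n)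

/-- The simple transposition `sᵢ = (i, i+1)`. -/

def sT (n i : ℕ) (h : i + 1 < n) : Perm (Fin n) :=
  Equiv.swap ⟨i, Nat.lt_of_succ_lt h⟩ ⟨i + 1, h⟩

/-- The dot (left) action: `(w·p)(v) = w(p(w⁻¹ v))`. -/

def dot {n : ℕ} (w : Perm (Fin n)) (p : Perm (Fin n) → Pol n) : Perm (Fin n) → Pol n :=
  fun v => pact w (p (w⁻¹ * v))

/-- The star (right) action: `(p * w)(v) = p(vw)`. -/

def starAct {n : ℕ} (p : Perm (Fin n) → Pol n) (w : Perm (Fin n)) :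
    Perm (Fin n) → Pol n :=
  fun v => p (v * w)

/-- `R` as a `ℂ[t₁,…,tₙ]`-submodule of the product. -/

def gkmSubmodule (n : ℕ) : Submodule (Pol n) (Perm (Fin n) → Pol n) where
  carrier := {p | GKM n p}
  add_mem' := by
    intro a b ha hb v i j hij
    have h := dvd_add (ha v i j hij) (hb v i j hij)
    simpa [Pi.add_apply, add_sub_add_comm] using h
  zero_mem' := by
    intro v i j hij
    simp
  smul_mem' := by
    intro c p hp v i j hij
    have h := (hp v i j hij).mul_left c
    simpa [Pi.smul_apply, smul_eq_mul, mul_sub] using h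

/-- The maximal ideal `𝔪 = (t₁,…,tₙ) ⊆ ℂ[t₁,…,tₙ]`. -/

def mIdeal (n : ℕ) : Ideal (Pol n) := Ideal.span (Set.range (X : Fin n → Pol n))

/-- The submodule `𝔪R`: finite sums of products `c • p` with `c ∈ 𝔪` and `p ∈ R`. -/

def mR (n : ℕ) : Submodule (Pol n) (Perm (Fin n) → Pol n) :=
  Submodule.span (Pol n) {q | ∃ c ∈ mIdeal n, ∃ p, GKM n p ∧ q = c • p}

/-!
Each `dot w` preserves the GKM conditions and `dot u ∘ average = average`, which gives the first
two claims. The canonical classes `p_w` form a basis of `R`: they are triangular with respect to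
length, and the GKM conditions force `p(m)` to be divisible by `p_m(m)` once `p` vanishes below
`ℓ(m)`. For a transposition `τ = (a b)` and `q ∈ R` one has `τ·q − q = (t_a − t_b) r` with
`r ∈ R`, so `average p_w − p_w ∈ 𝔪R`. Being homogeneous of degree `ℓ(w)`, its coordinate on `p_v`
is homogeneous of degree `ℓ(w) − ℓ(v)` and lies in `𝔪`, hence vanishes when `ℓ(v) ≥ ℓ(w)`. So the
averaged classes are obtained from the canonical basis by a matrix that is block unitriangular
for the grading by length; its determinant is `1`, and they form a basis too.
-/

namespace MvPolynomial

variable {σ R : Type*} [CommRing R]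

theorem X_sub_X_dvd_sub_rename_swap [DecidableEq σ] (a b : σ) (g : MvPolynomial σ R) :
    X a - X b ∣ g - rename (swap a b) g := by
  set I := Ideal.span {(X a - X b : MvPolynomial σ R)}
  have hmod : (Ideal.Quotient.mkₐ R I).comp (rename (swap a b)) = Ideal.Quotient.mkₐ R I := by
    refine algHom_ext fun k => ?_
    simp only [AlgHom.comp_apply, rename_X, Ideal.Quotient.mkₐ_eq_mk,
      Ideal.Quotient.mk_eq_mk_iff_sub_mem]
    rcases eq_or_ne k a with rfl | hka
    · rw [swap_apply_left, ← neg_sub, I.neg_mem_iff]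
      exact Ideal.mem_span_singleton_self _
    rcases eq_or_ne k b with rfl | hkb
    · rw [swap_apply_right]
      exact Ideal.mem_span_singleton_self _
    · simp [swap_apply_of_ne_of_ne hka hkb]
  rw [← Ideal.mem_span_singleton, ← Ideal.Quotient.mk_eq_mk_iff_sub_mem]
  simpa using (DFunLike.congr_fun hmod g).symm

theorem irreducible_X_sub_X [IsDomain R] {a b : σ} (hab : a ≠ b) :
    Irreducible (X a - X b : MvPolynomial σ R) := by
  classical
  refine irreducible_of_totalDegree_eq_one ?_ fun x hx => ?_
  · exact ((isHomogeneous_X R a).sub (isHomogeneous_X R b)).totalDegree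
      (sub_ne_zero.mpr ((X_injective (R := R)).ne hab))
  · exact isUnit_of_dvd_one <| by
      simpa [coeff_X, Finsupp.single_left_inj one_ne_zero, hab.symm] using hx (Finsupp.single a 1)

theorem prime_X_sub_X [IsDomain R] [UniqueFactorizationMonoid R] {a b : σ} (hab : a ≠ b) :
    Prime (X a - X b : MvPolynomial σ R) :=
  (irreducible_X_sub_X hab).prime

theorem not_X_sub_X_dvd [Nontrivial R] {a b c d : σ} (hcd : c ≠ d)
    (h : ¬ (c = a ∧ d = b)) (h' : ¬ (c = b ∧ d = a)) :
    ¬ (X a - X b ∣ (X c - X d : MvPolynomial σ R)) := by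
  classical
  intro hdvd
  -- substituting `X a` for `X b` kills `X a - X b` but not `X c - X d`
  have hzero := map_dvd (aeval fun k => if k = b then (X a : MvPolynomial σ R) else X k) hdvd
  simp only [map_sub, aeval_X, ite_self, if_true, sub_self, zero_dvd_iff, sub_eq_zero] at hzero
  split_ifs at hzero with hc hd hd <;> have := X_injective hzero <;> grind

theorem prod_X_sub_X_dvd [LinearOrder σ] [IsDomain R] [UniqueFactorizationMonoid R]
    {s : Finset (σ × σ)} (hs : ∀ q ∈ s, q.1 < q.2) {g : MvPolynomial σ R}
    (h : ∀ q ∈ s, X q.1 - X q.2 ∣ g) : ∏ q ∈ s, (X q.1 - X q.2) ∣ g := by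
  refine Finset.prod_dvd_of_isRelPrime (fun q hq r hr hqr => ?_) h
  refine (irreducible_X_sub_X (hs q hq).ne).isRelPrime_iff_not_dvd.mpr
    (not_X_sub_X_dvd (hs r hr).ne (fun h => hqr (Prod.ext h.1 h.2).symm) fun h => ?_)
  exact lt_asymm (hs q hq) (h.2 ▸ h.1 ▸ hs r hr)

section Semiring

variable {σ R : Type*} [CommSemiring R]

attribute [local instance] gradedAlgebra in
theorem homogeneousComponent_mul_of_isHomogeneous {a b : MvPolynomial σ R} {e : ℕ}
    (hb : b.IsHomogeneous e) (d : ℕ) :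
    homogeneousComponent d (a * b) =
      if e ≤ d then homogeneousComponent (d - e) a * b else 0 := by
  classical
  rw [← decomposition.decompose'_apply, ← decomposition.decompose'_apply]
  exact DirectSum.coe_decompose_mul_of_right_mem (homogeneousSubmodule σ R) d hb

end Semiring

end MvPolynomial

section Averaging

variable {n : ℕ}

theorem GKM.dvd_of_ne {p : Perm (Fin n) → Pol n} (hp : GKM n p) (v : Perm (Fin n))
    {i j : Fin n} (hij : i ≠ j) : (X i - X j : Pol n) ∣ p v - p (swap i j * v) := by
  rcases hij.lt_or_gt with h | h
  · exact hp v i j h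
  · rw [← neg_sub, neg_dvd, swap_comm]
    exact hp v j i h

theorem dot_one (p : Perm (Fin n) → Pol n) : dot 1 p = p := by
  funext v
  simp [dot, pact]

theorem dot_dot (u w : Perm (Fin n)) (p : Perm (Fin n) → Pol n) :
    dot u (dot w p) = dot (u * w) p := by
  funext v
  simp [dot, pact, rename_rename, mul_assoc]

theorem gkm_dot {p : Perm (Fin n) → Pol n} (hp : GKM n p) (w : Perm (Fin n)) :
    GKM n (dot w p) := by
  intro v i j hij
  have hne : w⁻¹ i ≠ w⁻¹ j := (w⁻¹).injective.ne hij.ne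
  have h := map_dvd (rename (R := ℂ) w) (hp.dvd_of_ne (w⁻¹ * v) hne)
  have hconj : swap (w⁻¹ i) (w⁻¹ j) * (w⁻¹ * v) = w⁻¹ * (swap i j * v) := by
    rw [swap_apply_apply]
    group
  rw [hconj, map_sub, map_sub, rename_X, rename_X] at h
  simpa [dot, pact] using h

def average (p : Perm (Fin n) → Pol n) : Perm (Fin n) → Pol n :=
  (n.factorial : ℂ)⁻¹ • ∑ w : Perm (Fin n), dot w p

theorem gkm_average {p : Perm (Fin n) → Pol n} (hp : GKM n p) : GKM n (average p) :=
  (gkmSubmodule n).smul_of_tower_mem _ (Submodule.sum_mem _ fun w _ => gkm_dot hp w)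

theorem dot_average (u : Perm (Fin n)) (p : Perm (Fin n) → Pol n) :
    dot u (average p) = average p := by
  have hlin : dot u (average p) = (n.factorial : ℂ)⁻¹ • ∑ w : Perm (Fin n), dot u (dot w p) := by
    funext v
    simp [average, dot, pact, Finset.sum_apply, map_sum]
  rw [hlin, average]
  simp_rw [dot_dot]
  congr 1
  exact Fintype.sum_equiv (Equiv.mulLeft u) _ _ fun w => rfl

theorem average_isHomogeneous {p : Perm (Fin n) → Pol n} {d : ℕ}
    (hp : ∀ v, (p v).IsHomogeneous d) (v : Perm (Fin n)) : (average p v).IsHomogeneous d := by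
  simp only [average, Pi.smul_apply, Finset.sum_apply]
  rw [← mem_homogeneousSubmodule]
  exact Submodule.smul_mem _ _ <| Submodule.sum_mem _ fun w _ =>
    (hp _).rename_isHomogeneous

theorem dot_swap_sub_self_mem_mR {q : Perm (Fin n) → Pol n} (hq : GKM n q) {a b : Fin n}
    (hab : a < b) : dot (swap a b) q - q ∈ mR n := by
  set τ := swap a b
  set f : Pol n := X a - X b
  have hτ : ∀ g : Pol n, rename τ (rename τ g) = g := fun g => by
    rw [rename_rename]
    convert rename_id_apply g
    ext; simp [τ]
  have hD : ∀ u, (dot τ q - q) u = rename τ (q (τ * u)) - q u := fun u => by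
    simp [dot, pact, τ]
  have hdvd : ∀ u, f ∣ (dot τ q - q) u := fun u => by
    rw [hD, ← sub_sub_sub_cancel_left _ _ (q (τ * u))]
    refine dvd_sub ?_ (X_sub_X_dvd_sub_rename_swap a b _)
    simpa [τ, ← mul_assoc] using hq.dvd_of_ne (τ * u) hab.ne
  choose r hr using hdvd
  -- `r` satisfies the GKM condition at `(i, j) ≠ (a, b)` because the prime `X i - X j` does not
  -- divide `f`, and at `(a, b)` because `r (τ * v) = τ (r v)`.
  have hrτ : ∀ v, r (τ * v) = rename τ (r v) := fun v => by
    have hf : rename τ f = -f := by simp [f, τ]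
    apply mul_left_cancel₀ (sub_ne_zero.mpr ((X_injective (R := ℂ)).ne hab.ne) : f ≠ 0)
    have := congrArg (rename τ) (hr v)
    rw [map_mul, hf, hD, map_sub, hτ] at this
    rw [← hr, hD, ← mul_assoc, swap_mul_self, one_mul]
    linear_combination -this
  have hr_gkm : GKM n r := by
    intro v i j hij
    by_cases hij' : (i, j) = (a, b)
    · obtain ⟨rfl, rfl⟩ := Prod.ext_iff.mp hij'
      rw [hrτ]
      exact X_sub_X_dvd_sub_rename_swap _ _ _
    · have hD_gkm : GKM n (dot τ q - q) := (gkmSubmodule n).sub_mem (gkm_dot hq τ) hq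
      have h := hD_gkm v i j hij
      rw [hr, hr, ← mul_sub] at h
      refine ((prime_X_sub_X hij.ne).dvd_or_dvd h).resolve_left ?_
      exact not_X_sub_X_dvd hab.ne (fun h => hij' (Prod.ext h.1.symm h.2.symm))
        fun h => (lt_asymm hij) (h.1 ▸ h.2 ▸ hab)
  have hfr : dot τ q - q = f • r := funext hr
  rw [hfr]
  exact Submodule.subset_span ⟨f, sub_mem (Ideal.subset_span ⟨a, rfl⟩)
    (Ideal.subset_span ⟨b, rfl⟩), r, hr_gkm, rfl⟩

theorem dot_sub_self_mem_mR {q : Perm (Fin n) → Pol n} (hq : GKM n q) (u : Perm (Fin n)) :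
    dot u q - q ∈ mR n := by
  induction u using Perm.swap_induction_on with
  | one => simp [dot_one]
  | swap_mul w a b hab ih =>
    rw [← dot_dot, ← sub_add_sub_cancel _ (dot w q)]
    refine add_mem ?_ ih
    rcases hab.lt_or_gt with h | h
    · exact dot_swap_sub_self_mem_mR (gkm_dot hq w) h
    · exact swap_comm a b ▸ dot_swap_sub_self_mem_mR (gkm_dot hq w) h

theorem average_sub_self_mem_mR {q : Perm (Fin n) → Pol n} (hq : GKM n q) :
    average q - q ∈ mR n := by
  have hsplit : average q - q = (n.factorial : ℂ)⁻¹ • ∑ w : Perm (Fin n), (dot w q - q) := by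
    rw [Finset.sum_sub_distrib, smul_sub, Finset.sum_const, Finset.card_univ, Fintype.card_perm,
      Fintype.card_fin, ← Nat.cast_smul_eq_nsmul ℂ, smul_smul,
      inv_mul_cancel₀ (Nat.cast_ne_zero.mpr n.factorial_ne_zero), one_smul, average]
  rw [hsplit]
  exact (mR n).smul_of_tower_mem _ (Submodule.sum_mem _ fun w _ => dot_sub_self_mem_mR hq w)

theorem bruhatLE.eq_or_len_lt {u v : Perm (Fin n)} (h : bruhatLE u v) : u = v ∨ len u < len v := by
  induction h with
  | refl => exact Or.inl rfl
  | tail _ hstep ih => exact Or.inr (ih.elim (· ▸ hstep.2) (·.trans hstep.2))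

theorem len_lt_card_add_one (w : Perm (Fin n)) : len w < Fintype.card (Fin n × Fin n) + 1 :=
  Nat.lt_succ_of_le (Finset.card_le_univ _)

theorem IsCanonical.apply_self_ne_zero {w : Perm (Fin n)} {p : Perm (Fin n) → Pol n}
    (h : IsCanonical w p) : p w ≠ 0 := by
  rw [h.2.2.2, Finset.prod_ne_zero_iff]
  exact fun q hq => sub_ne_zero.mpr (X_injective.ne (Finset.mem_filter.mp hq).2.1.ne)

theorem IsCanonical.apply_eq_zero_of_len_le {w v : Perm (Fin n)} {p : Perm (Fin n) → Pol n}
    (h : IsCanonical w p) (hlen : len v ≤ len w) (hne : v ≠ w) : p v = 0 :=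
  h.2.2.1 v fun hwv => (hwv.eq_or_len_lt).elim (hne ·.symm) (absurd hlen ·.not_ge)

theorem IsCanonical.apply_self_dvd {w : Perm (Fin n)} {p q : Perm (Fin n) → Pol n}
    (h : IsCanonical w p) (hq : GKM n q) (hq0 : ∀ v, len v < len w → q v = 0) :
    p w ∣ q w := by
  rw [h.2.2.2]
  refine prod_X_sub_X_dvd (fun r hr => (Finset.mem_filter.mp hr).2.1) fun r hr => ?_
  obtain ⟨hlt, hlen⟩ := (Finset.mem_filter.mp hr).2
  simpa [hq0 _ hlen] using hq w r.1 r.2 hlt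

section Canonical

variable {pw : Perm (Fin n) → Perm (Fin n) → Pol n}

theorem linearIndependent_canonical (hpw : ∀ w, IsCanonical w (pw w)) :
    LinearIndependent (Pol n) pw := by
  rw [Fintype.linearIndependent_iff]
  intro g hg m
  induction hm : len m using Nat.strong_induction_on generalizing m with
  | _ k ih =>
    have hterm : ∀ v ≠ m, g v * pw v m = 0 := fun v hne => by
      rcases lt_or_ge (len v) k with hlt | hle
      · rw [ih _ (hm ▸ hlt) v rfl, zero_mul]
      · rw [(hpw v).apply_eq_zero_of_len_le (hm ▸ hle) hne.symm, mul_zero]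
    have hm0 := congrFun hg m
    simp only [Finset.sum_apply, Pi.smul_apply, smul_eq_mul, Pi.zero_apply] at hm0
    rw [Finset.sum_eq_single m (fun v _ => hterm v) (by simp)] at hm0
    exact (mul_eq_zero.mp hm0).resolve_right (hpw m).apply_self_ne_zero

theorem span_canonical_le (hpw : ∀ w, IsCanonical w (pw w)) :
    Submodule.span (Pol n) (Set.range pw) ≤ gkmSubmodule n :=
  Submodule.span_le.mpr (Set.range_subset_iff.mpr fun w => (hpw w).1)

theorem exists_mem_span_canonical_eq_of_len_le (hpw : ∀ w, IsCanonical w (pw w))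
    {p : Perm (Fin n) → Pol n} (hp : GKM n p) {k : ℕ} (hk : ∀ v, len v < k → p v = 0) :
    ∃ s ∈ Submodule.span (Pol n) (Set.range pw), ∀ v, len v ≤ k → p v = s v := by
  have hc : ∀ m, ∃ c, len m = k → p m = c * pw m m := fun m => by
    by_cases hm : len m = k
    · obtain ⟨c, hc⟩ := (hpw m).apply_self_dvd hp (hm ▸ hk)
      exact ⟨c, fun _ => hc.trans (mul_comm _ _)⟩
    · exact ⟨0, fun h => absurd h hm⟩
  choose c hc using hc
  refine ⟨∑ m ∈ Finset.univ.filter (len · = k), c m • pw m,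
    Submodule.sum_mem _ fun m _ => Submodule.smul_mem _ _ (Submodule.subset_span ⟨m, rfl⟩),
    fun v hv => ?_⟩
  have hvanish : ∀ m ∈ Finset.univ.filter (len · = k), m ≠ v → c m * pw m v = 0 :=
    fun m hm hne => by
      rw [(hpw m).apply_eq_zero_of_len_le ((Finset.mem_filter.mp hm).2 ▸ hv) hne.symm, mul_zero]
  simp only [Finset.sum_apply, Pi.smul_apply, smul_eq_mul]
  rcases hv.lt_or_eq with hlt | heq
  · rw [hk v hlt, Finset.sum_eq_zero fun m hm =>
      hvanish m hm fun h => (Finset.mem_filter.mp hm).2.not_lt (h ▸ hlt)]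
  · rw [Finset.sum_eq_single_of_mem v (by simpa using heq) hvanish, hc v heq]

theorem mem_span_canonical (hpw : ∀ w, IsCanonical w (pw w)) {p : Perm (Fin n) → Pol n}
    (hp : GKM n p) : p ∈ Submodule.span (Pol n) (Set.range pw) := by
  suffices h : ∀ k, ∃ s ∈ Submodule.span (Pol n) (Set.range pw), ∀ v, len v < k → p v = s v by
    obtain ⟨s, hs, hps⟩ := h (Fintype.card (Fin n × Fin n) + 1)
    exact funext (fun v => hps v (len_lt_card_add_one v)) ▸ hs
  intro k
  induction k with
  | zero => exact ⟨0, zero_mem _, fun v hv => absurd hv (Nat.not_lt_zero _)⟩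
  | succ k ih =>
    obtain ⟨s, hs, hps⟩ := ih
    have hd : GKM n (p - s) := (gkmSubmodule n).sub_mem hp (span_canonical_le hpw hs)
    obtain ⟨s', hs', hps'⟩ := exists_mem_span_canonical_eq_of_len_le hpw hd
      fun v hv => sub_eq_zero.mpr (hps v hv)
    refine ⟨s + s', add_mem hs hs', fun v hv => ?_⟩
    rw [Pi.add_apply, ← hps' v (Nat.lt_succ_iff.mp hv), Pi.sub_apply, add_sub_cancel]

theorem span_canonical (hpw : ∀ w, IsCanonical w (pw w)) :
    Submodule.span (Pol n) (Set.range pw) = gkmSubmodule n :=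
  (span_canonical_le hpw).antisymm fun _ hp => mem_span_canonical hpw hp

def canonicalBasis (hpw : ∀ w, IsCanonical w (pw w)) :
    Module.Basis (Perm (Fin n)) (Pol n) (gkmSubmodule n) :=
  (Module.Basis.span (linearIndependent_canonical hpw)).map
    (LinearEquiv.ofEq _ _ (span_canonical hpw))

@[simp]
theorem coe_canonicalBasis (hpw : ∀ w, IsCanonical w (pw w)) (w : Perm (Fin n)) :
    (canonicalBasis hpw w : Perm (Fin n) → Pol n) = pw w := by
  simp [canonicalBasis]

theorem coeff_zero_eq_zero_of_mem_mIdeal {c : Pol n} (hc : c ∈ mIdeal n) :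
    coeff 0 c = 0 :=
  have hle : mIdeal n ≤ RingHom.ker (constantCoeff : Pol n →+* ℂ) :=
    Ideal.span_le.mpr (Set.range_subset_iff.mpr fun i => by simp)
  hle hc

theorem canonicalBasis_repr_mem_mIdeal (hpw : ∀ w, IsCanonical w (pw w))
    {z : gkmSubmodule n} (hz : (z : Perm (Fin n) → Pol n) ∈ mR n) (v : Perm (Fin n)) :
    (canonicalBasis hpw).repr z v ∈ mIdeal n := by
  set N := ((Submodule.pi Set.univ fun _ => mIdeal n).comap
    (canonicalBasis hpw).equivFun.toLinearMap).map (gkmSubmodule n).subtype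
  have hle : mR n ≤ N := by
    refine Submodule.span_le.mpr ?_
    rintro _ ⟨c, hc, p, hp, rfl⟩
    refine ⟨c • ⟨p, (hp : p ∈ gkmSubmodule n)⟩, fun v _ => ?_, by simp⟩
    rw [LinearEquiv.coe_coe, map_smul, Pi.smul_apply, smul_eq_mul]
    exact Ideal.mul_mem_right _ _ hc
  obtain ⟨y, hy, hyz⟩ := hle hz
  obtain rfl : y = z := Subtype.ext hyz
  exact hy v trivial

theorem canonicalBasis_repr_eq_homogeneousComponent (hpw : ∀ w, IsCanonical w (pw w))
    {z : gkmSubmodule n} {d : ℕ} (hz : ∀ x, (z.1 x).IsHomogeneous d) (v : Perm (Fin n)) :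
    (canonicalBasis hpw).repr z v =
      if len v ≤ d then homogeneousComponent (d - len v) ((canonicalBasis hpw).repr z v)
      else 0 := by
  set b := canonicalBasis hpw
  set c' : Perm (Fin n) → Pol n := fun v =>
    if len v ≤ d then homogeneousComponent (d - len v) (b.repr z v) else 0
  have hsum : ∀ x, z.1 x = ∑ v, b.repr z v * pw v x := fun x => by
    calc z.1 x = (∑ v, b.repr z v • b v).1 x := by rw [b.sum_repr]
      _ = _ := by
        simp only [Submodule.coe_sum, Submodule.coe_smul, Finset.sum_apply, Pi.smul_apply,
          smul_eq_mul, b, coe_canonicalBasis]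
  have h : b.equivFun.symm c' = z := by
    refine Subtype.ext (funext fun x => ?_)
    rw [← homogeneousComponent_eq_self (hz x), hsum x, map_sum]
    simp only [b.equivFun_symm_apply, Submodule.coe_sum, Submodule.coe_smul, Finset.sum_apply,
      Pi.smul_apply, smul_eq_mul, b, coe_canonicalBasis]
    refine Finset.sum_congr rfl fun v _ => ?_
    rw [homogeneousComponent_mul_of_isHomogeneous ((hpw v).2.1 x), ite_mul, zero_mul]
  calc b.repr z v = b.equivFun (b.equivFun.symm c') v := by rw [h, b.equivFun_apply]
    _ = c' v := by rw [b.equivFun.apply_symm_apply]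

theorem canonicalBasis_repr_eq_zero (hpw : ∀ w, IsCanonical w (pw w)) {z : gkmSubmodule n}
    {d : ℕ} (hzm : z.1 ∈ mR n) (hz : ∀ x, (z.1 x).IsHomogeneous d) {v : Perm (Fin n)}
    (hv : d ≤ len v) : (canonicalBasis hpw).repr z v = 0 := by
  rw [canonicalBasis_repr_eq_homogeneousComponent hpw hz, ite_eq_right_iff]
  intro hle
  rw [le_antisymm hle hv, Nat.sub_self, homogeneousComponent_zero,
    coeff_zero_eq_zero_of_mem_mIdeal (canonicalBasis_repr_mem_mIdeal hpw hzm v), C_0]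

def averagedCanonical (hpw : ∀ w, IsCanonical w (pw w)) (w : Perm (Fin n)) :
    gkmSubmodule n :=
  ⟨average (pw w), gkm_average (hpw w).1⟩

theorem toMatrix_averagedCanonical_of_len_le (hpw : ∀ w, IsCanonical w (pw w))
    {v w : Perm (Fin n)} (hvw : len w ≤ len v) :
    (canonicalBasis hpw).toMatrix (averagedCanonical hpw) v w = (1 : Matrix _ _ (Pol n)) v w := by
  have hrepr := canonicalBasis_repr_eq_zero hpw
    (z := averagedCanonical hpw w - canonicalBasis hpw w)
    (by simpa [averagedCanonical] using average_sub_self_mem_mR (hpw w).1)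
    (fun x => by
      simpa [averagedCanonical] using
        (average_isHomogeneous (hpw w).2.1 x).sub ((hpw w).2.1 x)) hvw
  rw [map_sub, Finsupp.sub_apply, sub_eq_zero] at hrepr
  rw [Module.Basis.toMatrix_apply, hrepr, Module.Basis.repr_self, Matrix.one_apply,
    Finsupp.single_apply]
  exact if_congr eq_comm rfl rfl

theorem det_toMatrix_averagedCanonical (hpw : ∀ w, IsCanonical w (pw w)) :
    ((canonicalBasis hpw).toMatrix (averagedCanonical hpw)).det = 1 := by
  have htri : ((canonicalBasis hpw).toMatrix (averagedCanonical hpw)).BlockTriangular len :=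
    fun v w hwv => by
      rw [toMatrix_averagedCanonical_of_len_le hpw hwv.le, Matrix.one_apply_ne]
      rintro rfl
      exact hwv.false
  rw [htri.det, Finset.prod_eq_one]
  intro k _
  suffices h : ((canonicalBasis hpw).toMatrix (averagedCanonical hpw)).toSquareBlock len k = 1 by
    rw [h, Matrix.det_one]
  ext ⟨v, hv⟩ ⟨w, hw⟩
  rw [Matrix.toSquareBlock_def, Matrix.of_apply,
    toMatrix_averagedCanonical_of_len_le hpw (hw.trans hv.symm).le]
  simp [Matrix.one_apply]

def averagedCanonicalBasis (hpw : ∀ w, IsCanonical w (pw w)) :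
    Module.Basis (Perm (Fin n)) (Pol n) (gkmSubmodule n) :=
  have h := ((canonicalBasis hpw).is_basis_iff_det).mpr
    (by rw [Module.Basis.det_apply, det_toMatrix_averagedCanonical]; exact isUnit_one)
  Module.Basis.mk h.1 h.2.ge

theorem coe_averagedCanonicalBasis (hpw : ∀ w, IsCanonical w (pw w)) (w : Perm (Fin n)) :
    (averagedCanonicalBasis hpw w : Perm (Fin n) → Pol n) = average (pw w) := by
  simp [averagedCanonicalBasis, averagedCanonical]

end Canonical

end Averaging

theorem averaging_map_trivial_representation_general (n : ℕ)
    (pw : Perm (Fin n) → Perm (Fin n) → Pol n)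
    (hpw : ∀ w, IsCanonical w (pw w)) :
    (∀ p, GKM n p → GKM n ((n.factorial : ℂ)⁻¹ • ∑ w : Perm (Fin n), dot w p)) ∧
    (∀ (u : Perm (Fin n)) (p), GKM n p →
      dot u ((n.factorial : ℂ)⁻¹ • ∑ w : Perm (Fin n), dot w p)
        = (n.factorial : ℂ)⁻¹ • ∑ w : Perm (Fin n), dot w p) ∧
    ∃ b : Module.Basis (Perm (Fin n)) (Pol n) (gkmSubmodule n),
      ∀ w, (b w : Perm (Fin n) → Pol n)
        = (n.factorial : ℂ)⁻¹ • ∑ u : Perm (Fin n), dot u (pw w) :=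
  ⟨fun _ hp => gkm_average hp, fun u p _ => dot_average u p,
    averagedCanonicalBasis hpw, coe_averagedCanonicalBasis hpw⟩

/-- the averaging map `f(p) = (1/n!) Σ_{w} w·p` maps `R` into `R`, its
images are invariant under the dot action, and the averaged canonical classes
`{f(p_w)}` form a `ℂ[t₁,…,tₙ]`-module basis of `R`; hence the dot representation of
`Sₙ` on `R` is a direct sum of `n!` copies of the trivial representation. -/
theorem averaging_map_trivial_representation (n : ℕ) (hn : 1 ≤ n)
    (pw : Perm (Fin n) → Perm (Fin n) → Pol n)
    (hpw : ∀ w, IsCanonical w (pw w)) :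
    (∀ p, GKM n p → GKM n ((n.factorial : ℂ)⁻¹ • ∑ w : Perm (Fin n), dot w p)) ∧
    (∀ (u : Perm (Fin n)) (p), GKM n p →
      dot u ((n.factorial : ℂ)⁻¹ • ∑ w : Perm (Fin n), dot w p)
        = (n.factorial : ℂ)⁻¹ • ∑ w : Perm (Fin n), dot w p) ∧
    ∃ b : Module.Basis (Perm (Fin n)) (Pol n) (gkmSubmodule n),
      ∀ w, (b w : Perm (Fin n) → Pol n)
        = (n.factorial : ℂ)⁻¹ • ∑ u : Perm (Fin n), dot u (pw w) :=
  averaging_map_trivial_representation_general n pw hpw
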